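/- Let μ be the scale-4 Cantor measure (satisfying ∫ f dμ = (1/2)(∫ f(x/4) dμ + ∫ f(x/4+1/2) dμ)), and let P = { l₀ + 4l₁ + 4²l₂ + ⋯ : lᵢ ∈ {0,1}, finite sums }. Then the exponentials e_λ(x) = e^{2πiλx}, λ ∈ P, are mutually orthogonal in L²(μ). -/

import Mathlib

open MeasureTheory

/-- The set of nonnegative integers (viewed in `ℝ`) whose base-4 expansion uses
only the digits 0 and 1, i.e. `P = {l₀ + 4l₁ + 4²l₂ + ⋯ : lᵢ ∈ {0,1}}`. -/
def P4 : Set ℝ :=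
  {lam : ℝ | ∃ (n : ℕ) (l : ℕ → ℕ), (∀ i, l i ≤ 1) ∧
    lam = ∑ i ∈ Finset.range n, (l i : ℝ) * 4 ^ i}

/-!
Applied to `x ↦ exp (i t x)`, the self-similarity of `μ` gives
`μ̂ t = (1 + exp (i t / 2)) / 2 * μ̂ (t / 4)` for its characteristic function `μ̂`, so `μ̂` vanishes
at `2π · 4 ^ k · r` for every odd integer `r`. The difference of two elements of `P` has base-4
digits in `{-1, 0, 1}`, so when it is nonzero it is of the form `4 ^ k · r` with `r` odd.
-/

open Complex Finset

/-- `μ = ½ ((φ₁)₊ μ + (φ₂)₊ μ)` for the contractions `φ₁ x = x / a`, `φ₂ x = x / a + b`, tested on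
continuous real functions. -/
def IsSelfSimilar (μ : Measure ℝ) (a b : ℝ) : Prop :=
  ∀ f : ℝ → ℝ, Continuous f →
    ∫ x, f x ∂μ = (1 / 2) * ((∫ x, f (x / a) ∂μ) + ∫ x, f (x / a + b) ∂μ)

namespace IsSelfSimilar

variable {μ : Measure ℝ} [IsFiniteMeasure μ] {a b : ℝ}

theorem integral_complex (hμ : IsSelfSimilar μ a b) {f : ℝ → ℂ} (hf : Continuous f) {C : ℝ}
    (hC : ∀ x, ‖f x‖ ≤ C) :
    ∫ x, f x ∂μ = (1 / 2) * ((∫ x, f (x / a) ∂μ) + ∫ x, f (x / a + b) ∂μ) := by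
  have hint : ∀ g : ℝ → ℝ, Continuous g → Integrable (fun x ↦ f (g x)) μ := fun g hg ↦
    .of_bound (hf.comp hg).aestronglyMeasurable C (.of_forall fun x ↦ hC (g x))
  have h₀ : Integrable f μ := hint _ continuous_id
  have h₁ := hint (· / a) (by fun_prop)
  have h₂ := hint (· / a + b) (by fun_prop)
  apply Complex.ext
  · have := hμ (fun x ↦ (f x).re) (by fun_prop)
    simp only [← RCLike.re_to_complex, integral_re h₀, integral_re h₁, integral_re h₂] at this
    simpa using this
  · have := hμ (fun x ↦ (f x).im) (by fun_prop)
    simp only [← RCLike.im_to_complex, integral_im h₀, integral_im h₁, integral_im h₂] at this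
    simpa using this

theorem charFun_eq_mul_charFun_div (hμ : IsSelfSimilar μ a b) (t : ℝ) :
    charFun μ t = (1 + exp (t * b * I)) / 2 * charFun μ (t / a) := by
  have h := integral_complex hμ (f := fun x ↦ exp (t * x * I)) (by fun_prop) (C := 1)
    fun x ↦ by exact_mod_cast (norm_exp_ofReal_mul_I (t * x)).le
  have hsplit : ∀ x : ℝ,
      exp (t * ↑(x / a + b) * I) = exp (↑(t / a) * x * I) * exp (t * b * I) := by
    intro x; rw [← exp_add]; push_cast; ring_nf
  have hscale : ∀ x : ℝ, exp (t * ↑(x / a) * I) = exp (↑(t / a) * x * I) := by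
    intro x; push_cast; ring_nf
  simp only [hscale, hsplit, integral_mul_const] at h
  rw [charFun_apply_real, charFun_apply_real, h]
  ring

theorem charFun_pow_mul_eq_zero (hμ : IsSelfSimilar μ a b) (ha : a ≠ 0) {t : ℝ}
    (ht : exp (t * b * I) = -1) (k : ℕ) :
    charFun μ (a ^ k * t) = 0 := by
  induction k with
  | zero => simp [charFun_eq_mul_charFun_div hμ t, ht]
  | succ k ih =>
    have hdiv : a ^ (k + 1) * t / a = a ^ k * t := by field_simp; ring
    rw [charFun_eq_mul_charFun_div hμ, hdiv, ih, mul_zero]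

end IsSelfSimilar

theorem Complex.exp_mul_pi_mul_I_of_odd {r : ℤ} (hr : Odd r) : exp (r * Real.pi * I) = -1 := by
  rw [mul_assoc, exp_int_mul, exp_pi_mul_I, hr.neg_one_zpow]

theorem exists_eq_pow_mul_odd_of_digits {B : ℤ} (hB : Even B) (N : ℕ) {d : ℕ → ℤ}
    (hd : ∀ i, |d i| ≤ 1) (h0 : ∑ i ∈ range N, d i * B ^ i ≠ 0) :
    ∃ (k : ℕ) (r : ℤ), Odd r ∧ ∑ i ∈ range N, d i * B ^ i = B ^ k * r := by
  induction N generalizing d with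
  | zero => simp at h0
  | succ N ih =>
    have hsplit : ∑ i ∈ range (N + 1), d i * B ^ i
        = B * ∑ i ∈ range N, d (i + 1) * B ^ i + d 0 := by
      rw [sum_range_succ', mul_sum]
      simp only [pow_succ, pow_zero, mul_one]
      congr 1
      exact sum_congr rfl fun i _ ↦ by ring
    by_cases hd0 : d 0 = 0
    · rw [hsplit, hd0, add_zero] at h0 ⊢
      obtain ⟨k, r, hr, hkr⟩ := ih (fun i ↦ hd (i + 1)) (right_ne_zero_of_mul h0)
      exact ⟨k + 1, r, hr, by rw [hkr]; ring⟩
    · have hodd : Odd (d 0) := by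
        have := abs_le.1 (hd 0)
        rw [Int.odd_iff]; omega
      exact ⟨0, _, hsplit ▸ (hB.mul_right _).add_odd hodd, by ring⟩

theorem eventually_exists_digits_of_mem_P4 {lam : ℝ} (h : lam ∈ P4) :
    ∀ᶠ N in Filter.atTop, ∃ l : ℕ → ℕ, (∀ i, l i ≤ 1) ∧ lam = ∑ i ∈ range N, (l i : ℝ) * 4 ^ i := by
  obtain ⟨n, l, hl, rfl⟩ := h
  filter_upwards [Filter.eventually_ge_atTop n] with N hN
  refine ⟨fun i ↦ if i < n then l i else 0, fun i ↦ by beta_reduce; split_ifs <;> simp [hl i], ?_⟩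
  rw [← sum_subset (range_subset_range.2 hN) fun i _ hi ↦ by simp [not_lt.1 (mt mem_range.2 hi)]]
  exact sum_congr rfl fun i hi ↦ by simp only [if_pos (mem_range.1 hi)]

theorem scale_four_exponentials_orthogonal (μ : Measure ℝ) [IsProbabilityMeasure μ]
    (hμ : ∀ f : ℝ → ℝ, Continuous f →
      ∫ x, f x ∂μ =
        (1 / 2) * ((∫ x, f (x / 4) ∂μ) + ∫ x, f (x / 4 + 1 / 2) ∂μ)) :
    ∀ lam ∈ P4, ∀ lam' ∈ P4, lam ≠ lam' →
      ∫ x, Complex.exp ((((2 : ℝ) * Real.pi * ((lam' - lam) * x) : ℝ) : ℂ) * Complex.I) ∂μ = 0 := by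
  intro lam hlam lam' hlam' hne
  obtain ⟨N, ⟨l, hl, rfl⟩, ⟨l', hl', rfl⟩⟩ :=
    ((eventually_exists_digits_of_mem_P4 hlam).and
      (eventually_exists_digits_of_mem_P4 hlam')).exists
  have hdiff : ∑ i ∈ range N, (l' i : ℝ) * 4 ^ i - ∑ i ∈ range N, (l i : ℝ) * 4 ^ i
      = ((∑ i ∈ range N, ((l' i : ℤ) - l i) * 4 ^ i : ℤ) : ℝ) := by
    push_cast
    rw [← sum_sub_distrib]
    exact sum_congr rfl fun i _ ↦ by ring
  obtain ⟨k, r, hr, hkr⟩ :=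
    exists_eq_pow_mul_odd_of_digits (B := 4) (d := fun i ↦ (l' i : ℤ) - l i) (by decide) N
      (fun i ↦ by have := hl i; have := hl' i; rw [abs_le]; omega)
      (by exact_mod_cast hdiff ▸ sub_ne_zero.2 hne.symm)
  have hhalf : exp (↑(2 * Real.pi * r) * ↑(1 / 2 : ℝ) * I) = -1 := by
    rw [← exp_mul_pi_mul_I_of_odd hr]; push_cast; ring_nf
  calc _ = charFun μ (4 ^ k * (2 * Real.pi * r)) := by
        rw [charFun_apply_real, hdiff, hkr]; congr with x; push_cast; ring_nf
    _ = 0 := IsSelfSimilar.charFun_pow_mul_eq_zero hμ four_ne_zero hhalf k
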